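/- arXiv:1304.2932 — 3 statements merged into one kernel-verified Lean document; each statement's English description precedes it below -/
import Mathlib

section
/- In the ultrafilter partition algebra A = {R_X : X ⊆ J}, the elements R_{{k}} = Q_k for k ∈ J are exactly the atoms of A, and the supremum in A of the set of all atoms {R_{{k}} : k ∈ J} equals the top element R_J. -/
/-!
The map `X ↦ R_X` is an order embedding of `Set J` into `Set V`: it is monotone because `F` is
upward closed, and `Q k ⊆ R_X` forces `k ∈ X`, since a point of `Q k` lies neither in `Q_i` nor in
any other `Q l`. Its image therefore has as atoms the images of the atoms of `Set J`, the
singletons, and only `R_J` lies above all of them.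
-/

open Classical Set Function

section PartitionUnion

variable {J V : Type*}

/-- The set `R_X` of the ultrafilter partition algebra. -/
def partitionUnion (F : Filter J) (Q : J → Set V) (Qi : Set V) (X : Set J) : Set V :=
  if X ∈ F then Qi ∪ ⋃ k ∈ X, Q k else ⋃ k ∈ X, Q k

variable {F : Filter J} {Q : J → Set V} {Qi : Set V}

theorem partitionUnion_of_notMem {X : Set J} (hX : X ∉ F) :
    partitionUnion F Q Qi X = ⋃ k ∈ X, Q k := by
  rw [partitionUnion, if_neg hX]

theorem partitionUnion_singleton {k : J} (hk : {k} ∉ F) : partitionUnion F Q Qi {k} = Q k := by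
  rw [partitionUnion_of_notMem hk, biUnion_singleton]

theorem partitionUnion_empty [F.NeBot] : partitionUnion F Q Qi ∅ = ∅ := by
  rw [partitionUnion_of_notMem F.empty_notMem, biUnion_empty]

theorem partitionUnion_univ (hcover : Qi ∪ ⋃ k, Q k = univ) : partitionUnion F Q Qi univ = univ := by
  rw [partitionUnion, if_pos F.univ_mem, biUnion_univ, hcover]

theorem partitionUnion_mono : Monotone (partitionUnion F Q Qi) := by
  intro X Y hXY
  have hUnion : ⋃ k ∈ X, Q k ⊆ ⋃ k ∈ Y, Q k := biUnion_subset_biUnion_left hXY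
  unfold partitionUnion
  split_ifs with hX hY hY
  · exact union_subset_union_right _ hUnion
  · exact absurd (F.sets_of_superset hX hXY) hY
  · exact hUnion.trans subset_union_right
  · exact hUnion

theorem subset_partitionUnion {k : J} {X : Set J} (hk : k ∈ X) :
    Q k ⊆ partitionUnion F Q Qi X := by
  unfold partitionUnion
  split_ifs
  · exact (subset_biUnion_of_mem hk).trans subset_union_right
  · exact subset_biUnion_of_mem hk

theorem mem_of_subset_partitionUnion (hQ : ∀ k, (Q k).Nonempty) (hdisj : Pairwise (Disjoint on Q))
    (hdisji : ∀ k, Disjoint (Q k) Qi) {k : J} {X : Set J} (hkX : Q k ⊆ partitionUnion F Q Qi X) :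
    k ∈ X := by
  obtain ⟨x, hx⟩ := hQ k
  have hxX : x ∈ Qi ∪ ⋃ l ∈ X, Q l := by
    unfold partitionUnion at hkX
    split_ifs at hkX
    · exact hkX hx
    · exact Or.inr (hkX hx)
  rcases hxX with hxi | hxX
  · exact absurd hxi ((hdisji k).notMem_of_mem_left hx)
  · obtain ⟨l, hl, hxl⟩ := mem_iUnion₂.1 hxX
    obtain rfl : l = k := by_contra fun hlk => (hdisj hlk).notMem_of_mem_left hxl hx
    exact hl

theorem partitionUnion_subset_partitionUnion_iff (hQ : ∀ k, (Q k).Nonempty)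
    (hdisj : Pairwise (Disjoint on Q)) (hdisji : ∀ k, Disjoint (Q k) Qi) {X Y : Set J} :
    partitionUnion F Q Qi X ⊆ partitionUnion F Q Qi Y ↔ X ⊆ Y :=
  ⟨fun hXY _ hk => mem_of_subset_partitionUnion hQ hdisj hdisji
    ((subset_partitionUnion hk).trans hXY), fun hXY => partitionUnion_mono hXY⟩

theorem partitionUnion_minimal_iff [F.NeBot] (hQ : ∀ k, (Q k).Nonempty)
    (hdisj : Pairwise (Disjoint on Q)) (hdisji : ∀ k, Disjoint (Q k) Qi) (X : Set J) :
    (partitionUnion F Q Qi X ≠ ∅ ∧ ∀ b ∈ range (partitionUnion F Q Qi),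
      b ⊆ partitionUnion F Q Qi X → b = ∅ ∨ b = partitionUnion F Q Qi X) ↔
      ∃ k, partitionUnion F Q Qi X = partitionUnion F Q Qi {k} := by
  have hsingleton_ne (k : J) : partitionUnion F Q Qi {k} ≠ ∅ :=
    ((hQ k).mono (subset_partitionUnion (mem_singleton k))).ne_empty
  constructor
  · rintro ⟨hne, hmin⟩
    obtain ⟨k, hk⟩ : X.Nonempty :=
      nonempty_iff_ne_empty.2 fun hX => hne (hX ▸ partitionUnion_empty)
    have hkX : partitionUnion F Q Qi {k} ⊆ partitionUnion F Q Qi X :=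
      partitionUnion_mono (singleton_subset_iff.2 hk)
    exact ⟨k, ((hmin _ ⟨{k}, rfl⟩ hkX).resolve_left (hsingleton_ne k)).symm⟩
  · rintro ⟨k, hX⟩
    refine ⟨hX ▸ hsingleton_ne k, ?_⟩
    rintro _ ⟨Y, rfl⟩ hYX
    rw [hX, partitionUnion_subset_partitionUnion_iff hQ hdisj hdisji,
      subset_singleton_iff_eq] at hYX
    rcases hYX with rfl | rfl
    · exact Or.inl partitionUnion_empty
    · exact Or.inr hX.symm

end PartitionUnion

theorem stmt3_general {J V : Type*}
    (F : Ultrafilter J) (hF : ∀ k : J, {k} ∉ F)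
    (Q : J → Set V) (Qi : Set V)
    (hQne : ∀ k, (Q k).Nonempty)
    (hdisj : ∀ k l, k ≠ l → Disjoint (Q k) (Q l))
    (hdisji : ∀ k, Disjoint (Q k) Qi)
    (hcover : Qi ∪ ⋃ k, Q k = Set.univ)
    (R : Set J → Set V)
    (hR : ∀ X : Set J, R X =
      if X ∈ F then Qi ∪ ⋃ k ∈ X, Q k else ⋃ k ∈ X, Q k)
    (A : Set (Set V)) (hA : A = Set.range R) :
    (∀ k : J, R {k} = Q k) ∧
    -- the atoms of A are exactly the R {k}, k ∈ J
    (∀ a ∈ A, (a ≠ ∅ ∧ ∀ b ∈ A, b ⊆ a → b = ∅ ∨ b = a) ↔ ∃ k : J, a = R {k}) ∧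
    -- the supremum in A of the set of atoms is the top element R J = V
    (∀ y ∈ A, (∀ k : J, R {k} ⊆ y) → y = R Set.univ) ∧
    R Set.univ = Set.univ := by
  obtain rfl : R = partitionUnion (F : Filter J) Q Qi := funext hR
  subst hA
  have hpairwise : Pairwise (Disjoint on Q) := fun k l => hdisj k l
  refine ⟨fun k => partitionUnion_singleton (hF k), ?_, ?_, partitionUnion_univ hcover⟩
  · rintro _ ⟨X, rfl⟩
    exact partitionUnion_minimal_iff hQne hpairwise hdisji X
  · rintro _ ⟨Y, rfl⟩ hY
    have hYuniv : Y = univ := eq_univ_of_forall fun k =>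
      singleton_subset_iff.1 ((partitionUnion_subset_partitionUnion_iff hQne hpairwise hdisji).1 (hY k))
    rw [hYuniv]

/-- in the ultrafilter partition algebra `A = {R_X : X ⊆ J}`,
the elements `R {k} = Q k` are exactly the atoms, and the supremum in `A`
of the set of atoms is the top element `R J = V`. -/
theorem stmt3 {J V : Type*} [Infinite J]
    (F : Ultrafilter J) (hF : ∀ k : J, {k} ∉ F)
    (Q : J → Set V) (Qi : Set V)
    (hQne : ∀ k, (Q k).Nonempty) (hQine : Qi.Nonempty)
    (hdisj : ∀ k l, k ≠ l → Disjoint (Q k) (Q l))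
    (hdisji : ∀ k, Disjoint (Q k) Qi)
    (hcover : Qi ∪ ⋃ k, Q k = Set.univ)
    (R : Set J → Set V)
    (hR : ∀ X : Set J, R X =
      if X ∈ F then Qi ∪ ⋃ k ∈ X, Q k else ⋃ k ∈ X, Q k)
    (A : Set (Set V)) (hA : A = Set.range R) :
    (∀ k : J, R {k} = Q k) ∧
    -- the atoms of A are exactly the R {k}, k ∈ J
    (∀ a ∈ A, (a ≠ ∅ ∧ ∀ b ∈ A, b ⊆ a → b = ∅ ∨ b = a) ↔ ∃ k : J, a = R {k}) ∧
    -- the supremum in A of the set of atoms is the top element R J = V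
    (∀ y ∈ A, (∀ k : J, R {k} ⊆ y) → y = R Set.univ) ∧
    R Set.univ = Set.univ :=
  stmt3_general F hF Q Qi hQne hdisj hdisji hcover R hR A hA
end

section
/- In the ultrafilter partition algebra, suppose an operation s on A satisfies s(R_X) = ∅ whenever X ∉ F and s(R_X) = R_J whenever X ∈ F. Then s fails complete additivity: the supremum in A of {s(R_{{k}}) : k ∈ J} is ∅, while s applied to the supremum of {R_{{k}} : k ∈ J} equals R_J ≠ ∅. -/
open Classical Function

/-!
A point of the nonempty block `Q k` lies in `R X` only if `k ∈ X`, because the blocks are pairwise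
disjoint and disjoint from `Qi`. Hence an `R X` above every atom `R {k} = Q k` has `X = univ`,
while `s` kills every atom since no singleton lies in the non-principal ultrafilter `F`.
-/

theorem mem_of_subset_union_biUnion {J V : Type*} {Q : J → Set V} {Qi : Set V} {k : J}
    (hne : (Q k).Nonempty) (hdisj : Pairwise (Disjoint on Q)) (hdisji : Disjoint (Q k) Qi)
    {X : Set J} (h : Q k ⊆ Qi ∪ ⋃ l ∈ X, Q l) : k ∈ X := by
  obtain ⟨v, hv⟩ := hne
  rcases h hv with hvi | hvX
  · exact absurd hvi (Set.disjoint_left.mp hdisji hv)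
  · obtain ⟨l, hl, hvl⟩ := Set.mem_iUnion₂.mp hvX
    obtain rfl | hkl := eq_or_ne k l
    · exact hl
    · exact absurd hvl (Set.disjoint_left.mp (hdisj hkl) hv)

/-- `R` is the map `X ↦ R_X` of the ultrafilter partition algebra. -/
def IsUltrafilterPartitionMap {J V : Type*} (F : Ultrafilter J) (Q : J → Set V) (Qi : Set V)
    (R : Set J → Set V) : Prop :=
  ∀ X : Set J, R X = if X ∈ F then Qi ∪ ⋃ k ∈ X, Q k else ⋃ k ∈ X, Q k

namespace IsUltrafilterPartitionMap

variable {J V : Type*} {F : Ultrafilter J} {Q : J → Set V} {Qi : Set V} {R : Set J → Set V}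

theorem subset_union_biUnion (hR : IsUltrafilterPartitionMap F Q Qi R) (X : Set J) :
    R X ⊆ Qi ∪ ⋃ k ∈ X, Q k := by
  rw [hR X]
  split_ifs
  · exact subset_rfl
  · exact Set.subset_union_right

theorem map_empty (hR : IsUltrafilterPartitionMap F Q Qi R) : R ∅ = ∅ := by
  simp [hR ∅, F.empty_notMem]

theorem map_singleton (hR : IsUltrafilterPartitionMap F Q Qi R) {k : J} (hk : {k} ∉ F) :
    R {k} = Q k := by
  simp [hR {k}, hk]

theorem map_univ_nonempty (hR : IsUltrafilterPartitionMap F Q Qi R) (hQi : Qi.Nonempty) :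
    (R Set.univ).Nonempty := by
  rw [hR Set.univ, if_pos (show Set.univ ∈ F from Filter.univ_mem)]
  exact hQi.mono Set.subset_union_left

theorem eq_univ_of_map_singleton_subset (hR : IsUltrafilterPartitionMap F Q Qi R)
    (hF : ∀ k : J, {k} ∉ F) (hne : ∀ k, (Q k).Nonempty) (hdisj : Pairwise (Disjoint on Q))
    (hdisji : ∀ k, Disjoint (Q k) Qi) {X : Set J} (hX : ∀ k, R {k} ⊆ R X) : X = Set.univ :=
  Set.eq_univ_of_forall fun k =>
    mem_of_subset_union_biUnion (hne k) hdisj (hdisji k) <|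
      (hR.map_singleton (hF k)).symm.subset.trans <| (hX k).trans (hR.subset_union_biUnion X)

end IsUltrafilterPartitionMap

theorem stmt4_general {J V : Type*}
    (F : Ultrafilter J) (hF : ∀ k : J, {k} ∉ F)
    (Q : J → Set V) (Qi : Set V)
    (hQne : ∀ k, (Q k).Nonempty) (hQine : Qi.Nonempty)
    (hdisj : ∀ k l, k ≠ l → Disjoint (Q k) (Q l))
    (hdisji : ∀ k, Disjoint (Q k) Qi)
    (R : Set J → Set V)
    (hR : ∀ X : Set J, R X =
      if X ∈ F then Qi ∪ ⋃ k ∈ X, Q k else ⋃ k ∈ X, Q k)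
    (A : Set (Set V)) (hA : A = Set.range R)
    (s : Set V → Set V)
    (hs₁ : ∀ X : Set J, X ∉ F → s (R X) = ∅)
    (hs₂ : ∀ X : Set J, X ∈ F → s (R X) = R Set.univ) :
    -- the supremum in A of {s (R {k}) : k ∈ J} is ∅ :
    (∀ k : J, s (R {k}) = ∅) ∧
    (∀ y ∈ A, (∀ k : J, s (R {k}) ⊆ y) → (∅ : Set V) ⊆ y) ∧
    ((∅ : Set V) ∈ A) ∧
    -- while the supremum of {R {k} : k ∈ J} in A is R J, and s (R J) = R J ≠ ∅ :
    (∀ y ∈ A, (∀ k : J, R {k} ⊆ y) → y = R Set.univ) ∧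
    s (R Set.univ) = R Set.univ ∧ R Set.univ ≠ ∅ := by
  have hR' : IsUltrafilterPartitionMap F Q Qi R := hR
  subst hA
  refine ⟨fun k => hs₁ {k} (hF k), fun y _ _ => Set.empty_subset y, ⟨∅, hR'.map_empty⟩, ?_,
    hs₂ Set.univ Filter.univ_mem, (hR'.map_univ_nonempty hQine).ne_empty⟩
  rintro _ ⟨X, rfl⟩ hX
  rw [hR'.eq_univ_of_map_singleton_subset hF hQne hdisj hdisji hX]

/-- in the ultrafilter partition algebra, an operation `s` with
`s (R X) = ∅` for `X ∉ F` and `s (R X) = R J` for `X ∈ F` fails complete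
additivity: the supremum in `A` of `{s (R {k}) : k ∈ J}` is `∅`, while
`s` applied to the supremum `R J` of `{R {k} : k ∈ J}` is `R J ≠ ∅`. -/
theorem stmt4 {J V : Type*} [Infinite J]
    (F : Ultrafilter J) (hF : ∀ k : J, {k} ∉ F)
    (Q : J → Set V) (Qi : Set V)
    (hQne : ∀ k, (Q k).Nonempty) (hQine : Qi.Nonempty)
    (hdisj : ∀ k l, k ≠ l → Disjoint (Q k) (Q l))
    (hdisji : ∀ k, Disjoint (Q k) Qi)
    (hcover : Qi ∪ ⋃ k, Q k = Set.univ)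
    (R : Set J → Set V)
    (hR : ∀ X : Set J, R X =
      if X ∈ F then Qi ∪ ⋃ k ∈ X, Q k else ⋃ k ∈ X, Q k)
    (A : Set (Set V)) (hA : A = Set.range R)
    (s : Set V → Set V)
    (hs₁ : ∀ X : Set J, X ∉ F → s (R X) = ∅)
    (hs₂ : ∀ X : Set J, X ∈ F → s (R X) = R Set.univ) :
    -- the supremum in A of {s (R {k}) : k ∈ J} is ∅ :
    (∀ k : J, s (R {k}) = ∅) ∧
    (∀ y ∈ A, (∀ k : J, s (R {k}) ⊆ y) → (∅ : Set V) ⊆ y) ∧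
    ((∅ : Set V) ∈ A) ∧
    -- while the supremum of {R {k} : k ∈ J} in A is R J, and s (R J) = R J ≠ ∅ :
    (∀ y ∈ A, (∀ k : J, R {k} ⊆ y) → y = R Set.univ) ∧
    s (R Set.univ) = R Set.univ ∧ R Set.univ ≠ ∅ :=
  stmt4_general F hF Q Qi hQne hQine hdisj hdisji R hR A hA s hs₁ hs₂
end

section
/- With V, y, t₁, t₂ as above: the singleton {s} equals c₁({t₁}) ∩ c₀({t₂}), where cᵢ(X) = {u ∈ V : ∃v ∈ X, u j = v j for all j ≠ i} is the i-th cylindrification on subsets of V. -/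
/-- The `i`-th cylindrification on sets of finitely supported sequences:
`cᵢ X = {u : ∃ v ∈ X, u j = v j for all j ≠ i}`. -/
def cyl {ι F : Type*} [Zero F] (i : ι) (X : Set (ι →₀ F)) : Set (ι →₀ F) :=
  {u | ∃ v ∈ X, ∀ j, j ≠ i → u j = v j}

/-- with `V = ι →₀ F`, `t₁`, `t₂` as in the construction
(`t₁` agrees with `s` off index `1 = o`, `t₂` agrees with `s` off index `0 = z`),
the singleton `{s}` equals `c₁ {t₁} ∩ c₀ {t₂}`. -/
theorem stmt7 {F : Type*} [Field F] [CharZero F]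
    {ι : Type*} [LinearOrder ι] (z o : ι)
    (hz : ∀ i, z ≤ i) (hzo : z < o) (hsucc : ∀ i, i = z ∨ i = o ∨ o < i)
    (s : ι →₀ F)
    (t₁ t₂ : ι →₀ F)
    (ht₁ : t₁ = Finsupp.update s o
      (s z + 1 - ∑ i ∈ (s.support.erase z).erase o, s i))
    (ht₂ : t₂ = Finsupp.update s z ((∑ i ∈ s.support.erase z, s i) - 1)) :
    ({s} : Set (ι →₀ F)) = cyl o {t₁} ∩ cyl z {t₂} := by
  have h1 : ∀ j, j ≠ o → t₁ j = s j := by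
    intro j hj; rw [ht₁, Finsupp.coe_update]; exact Function.update_of_ne hj _ _
  have h2 : ∀ j, j ≠ z → t₂ j = s j := by
    intro j hj; rw [ht₂, Finsupp.coe_update]; exact Function.update_of_ne hj _ _
  ext u
  constructor
  · rintro rfl
    exact ⟨⟨t₁, rfl, fun j hj => (h1 j hj).symm⟩,
           ⟨t₂, rfl, fun j hj => (h2 j hj).symm⟩⟩
  · rintro ⟨⟨v1, rfl, hv1⟩, ⟨v2, rfl, hv2⟩⟩
    have : u = s := by
      ext j
      rcases eq_or_ne j o with rfl | hj
      · have hjz : j ≠ z := hzo.ne'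
        rw [hv2 j hjz, h2 j hjz]
      · rw [hv1 j hj, h1 j hj]
    simp [this]
end
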